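/- Let m be the minimum value of Γ(t+1) over t ≥ 0 (equivalently, m = min_{t ∈ [0,1]} Γ(t+1); m ≈ 0.8856). For every real x ≥ 1 and every real z with ⌊z⌋ ≥ 2, one has (1/x)·( e_{⌊z⌋}(x) − 1 ) ≤ E(x,z) ≤ x·( e_{⌈z⌉−1}(x) + (1−m)/m ). -/
import Mathlib

open Real Set intervalIntegral Finset

-- continuity of the integrand on Ici 0
lemma Efun_contOn {x : ℝ} (hx : 0 < x) :
    ContinuousOn (fun t : ℝ => x ^ t / Real.Gamma (t + 1)) (Set.Ici 0) := by
  have h1 : Continuous fun t : ℝ => x ^ t := by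
    have : (fun t : ℝ => x ^ t) = fun t => Real.exp (Real.log x * t) :=
      funext fun t => Real.rpow_def_of_pos hx t
    rw [this]
    exact Real.continuous_exp.comp (continuous_const.mul continuous_id)
  have h2 : ∀ t ∈ Set.Ici (0:ℝ), ContinuousAt (fun t : ℝ => Real.Gamma (t + 1)) t := by
    intro t ht
    have hne : ∀ n : ℕ, t + 1 ≠ -n := by
      intro n
      have : (0:ℝ) ≤ n := n.cast_nonneg
      simp only [Set.mem_Ici] at ht
      nlinarith
    exact ContinuousAt.comp (g := Real.Gamma) (f := fun s : ℝ => s + 1)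
      (Real.differentiableAt_Gamma hne).continuousAt (by fun_prop)
  refine (h1.continuousOn).div (fun t ht => (h2 t ht).continuousWithinAt) ?_
  intro t ht
  exact (Real.Gamma_pos_of_pos (by simp only [Set.mem_Ici] at ht; linarith)).ne'

-- Gamma upper bound on interval
lemma Gamma_upper (k : ℕ) {t : ℝ} (ht : t ∈ Set.Icc (k:ℝ) (k+1)) :
    Real.Gamma (t + 1) ≤ (Nat.factorial (k+1) : ℝ) := by
  have hseg : t + 1 ∈ segment ℝ ((k:ℝ)+1) ((k:ℝ)+2) := by
    rw [segment_eq_Icc (by linarith)]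
    constructor <;> [linarith [ht.1]; linarith [ht.2]]
  have h := Real.convexOn_Gamma.le_on_segment
    (x := (k:ℝ)+1) (y := (k:ℝ)+2)
    (by simp only [Set.mem_Ioi]; positivity)
    (by simp only [Set.mem_Ioi]; positivity) hseg
  have e1 : Real.Gamma ((k:ℝ)+1) = (Nat.factorial k : ℝ) := Real.Gamma_nat_eq_factorial k
  have e2 : Real.Gamma ((k:ℝ)+2) = (Nat.factorial (k+1) : ℝ) := by
    have := Real.Gamma_nat_eq_factorial (k+1)
    push_cast at this ⊢
    convert this using 2
    ring
  rw [e1, e2] at h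
  refine h.trans (max_le ?_ le_rfl)
  exact_mod_cast Nat.factorial_le (Nat.le_succ k)

-- Gamma lower bound on interval, k ≥ 1
lemma Gamma_lower (k : ℕ) (hk : 1 ≤ k) {t : ℝ} (ht : t ∈ Set.Icc (k:ℝ) (k+1)) :
    (Nat.factorial k : ℝ) ≤ Real.Gamma (t + 1) := by
  have h2 : (2:ℝ) ≤ (k:ℝ) + 1 := by
    have : (1:ℝ) ≤ k := by exact_mod_cast hk
    linarith
  have := Real.Gamma_strictMonoOn_Ici.monotoneOn
    (show ((k:ℝ)+1) ∈ Set.Ici (2:ℝ) from Set.mem_Ici.mpr h2)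
    (show t+1 ∈ Set.Ici (2:ℝ) from Set.mem_Ici.mpr (by linarith [ht.1]))
    (by linarith [ht.1])
  rwa [Real.Gamma_nat_eq_factorial k] at this

/-- `E(x,z) = ∫_0^z x^t / Γ(t+1) dt` (with `x^t` the real power). -/
noncomputable def Efun (x z : ℝ) : ℝ :=
  ∫ t in (0 : ℝ)..z, x ^ t / Real.Gamma (t + 1)

/-- `e_n(x) = Σ_{k=0}^{n} x^k / k!`, the `n`-th partial sum of the exponential series. -/
noncomputable def esum (n : ℕ) (x : ℝ) : ℝ :=
  ∑ k ∈ Finset.range (n + 1), x ^ k / (Nat.factorial k : ℝ)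

/-- Let `m` be the minimum value of `Γ(t+1)` over `t ≥ 0`. For `x ≥ 1` and `⌊z⌋ ≥ 2`,
`(1/x)(e_{⌊z⌋}(x) − 1) ≤ E(x,z) ≤ x(e_{⌈z⌉−1}(x) + (1−m)/m)`. -/
theorem Efun_bounds (m : ℝ)
    (hm : IsLeast ((fun t : ℝ => Real.Gamma (t + 1)) '' Set.Ici (0 : ℝ)) m)
    (x z : ℝ) (hx : 1 ≤ x) (hz : 2 ≤ ⌊z⌋) :
    (1 / x) * (esum (⌊z⌋).toNat x - 1) ≤ Efun x z ∧
    Efun x z ≤ x * (esum ((⌈z⌉).toNat - 1) x + (1 - m) / m) := by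
  obtain ⟨t0, ht0, hmt0⟩ := hm.1
  have hm0 : 0 < m := by
    rw [← hmt0]
    exact Real.Gamma_pos_of_pos (by simp only [Set.mem_Ici] at ht0; linarith)
  have hmle : ∀ t : ℝ, 0 ≤ t → m ≤ Real.Gamma (t + 1) := fun t ht =>
    hm.2 ⟨t, Set.mem_Ici.mpr ht, rfl⟩
  have hx0 : (0:ℝ) < x := lt_of_lt_of_le one_pos hx
  set f : ℝ → ℝ := fun t => x ^ t / Real.Gamma (t + 1) with hfdef
  have hE : Efun x z = ∫ t in (0:ℝ)..z, f t := rfl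
  have hcont := Efun_contOn hx0
  have hint : ∀ a b : ℝ, 0 ≤ a → a ≤ b →
      IntervalIntegrable f MeasureTheory.volume a b := by
    intro a b ha hab
    apply (hcont.mono ?_).intervalIntegrable
    rw [Set.uIcc_of_le hab]
    intro t ht
    exact le_trans ha ht.1
  have hfnonneg : ∀ t : ℝ, 0 ≤ t → 0 ≤ f t := by
    intro t ht
    have h1 : 0 < Real.Gamma (t + 1) := Real.Gamma_pos_of_pos (by linarith)
    have h2 : 0 ≤ x ^ t := (Real.rpow_pos_of_pos hx0 t).le
    positivity
  have hz2 : (2:ℝ) ≤ z := by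
    have h1 := Int.floor_le z
    have h2 : ((2:ℤ):ℝ) ≤ (⌊z⌋:ℝ) := by exact_mod_cast hz
    push_cast at h2
    linarith
  set n : ℕ := (⌊z⌋).toNat with hndef
  have hn2 : 2 ≤ n := by omega
  have hnz : (n:ℝ) ≤ z := by
    have h1 : ((n:ℤ):ℝ) ≤ z := by
      rw [hndef, Int.toNat_of_nonneg (by omega)]
      exact Int.floor_le z
    exact_mod_cast h1
  set N : ℕ := (⌈z⌉).toNat with hNdef
  have hceil : 2 ≤ ⌈z⌉ := le_trans hz (Int.floor_le_ceil z)
  have hN2 : 2 ≤ N := by omega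
  have hzN : z ≤ (N:ℝ) := by
    have h1 : z ≤ ((N:ℤ):ℝ) := by
      rw [hNdef, Int.toNat_of_nonneg (by omega)]
      exact Int.le_ceil z
    exact_mod_cast h1
  -- per-interval lower bound
  have key_ge : ∀ k : ℕ, x ^ k / (Nat.factorial (k+1) : ℝ) ≤
      ∫ t in (k:ℝ)..((k:ℝ)+1), f t := by
    intro k
    have h1 : x ^ k / (Nat.factorial (k+1) : ℝ)
        = ∫ _t in (k:ℝ)..((k:ℝ)+1), x ^ k / (Nat.factorial (k+1) : ℝ) := by
      rw [intervalIntegral.integral_const]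
      simp
    rw [h1]
    apply intervalIntegral.integral_mono_on (by linarith) intervalIntegrable_const
      (hint k (k+1) (by positivity) (by linarith))
    intro t ht
    have hG := Gamma_upper k ht
    have hGpos : 0 < Real.Gamma (t+1) :=
      Real.Gamma_pos_of_pos (by have h := ht.1; have hk0 : (0:ℝ) ≤ (k:ℝ) := Nat.cast_nonneg k; linarith)
    have hxt : x ^ k ≤ x ^ t := by
      rw [← Real.rpow_natCast x k]
      exact Real.rpow_le_rpow_of_exponent_le hx ht.1
    exact div_le_div₀ (Real.rpow_pos_of_pos hx0 t).le hxt hGpos hG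
  -- per-interval upper bounds
  have key_le : ∀ k : ℕ, 1 ≤ k →
      (∫ t in (k:ℝ)..((k:ℝ)+1), f t) ≤ x ^ (k+1) / (Nat.factorial k : ℝ) := by
    intro k hk
    have h1 : x ^ (k+1) / (Nat.factorial k : ℝ)
        = ∫ _t in (k:ℝ)..((k:ℝ)+1), x ^ (k+1) / (Nat.factorial k : ℝ) := by
      rw [intervalIntegral.integral_const]
      simp
    rw [h1]
    apply intervalIntegral.integral_mono_on (by linarith)
      (hint k (k+1) (by positivity) (by linarith)) intervalIntegrable_const
    intro t ht
    have hG := Gamma_lower k hk ht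
    have hfac : (0:ℝ) < (Nat.factorial k : ℝ) := by exact_mod_cast k.factorial_pos
    have hGpos : 0 < Real.Gamma (t+1) :=
      Real.Gamma_pos_of_pos (by have h := ht.1; have hk0 : (0:ℝ) ≤ (k:ℝ) := Nat.cast_nonneg k; linarith)
    have hxt : x ^ t ≤ x ^ (k+1) := by
      rw [← Real.rpow_natCast x (k+1)]
      exact Real.rpow_le_rpow_of_exponent_le hx (by push_cast; linarith [ht.2])
    exact div_le_div₀ (by positivity) hxt hfac hG
  have key_le0 : (∫ t in (0:ℝ)..1, f t) ≤ x / m := by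
    have h1 : x / m = ∫ _t in (0:ℝ)..1, x / m := by
      rw [intervalIntegral.integral_const]
      simp
    rw [h1]
    apply intervalIntegral.integral_mono_on (by norm_num)
      (hint 0 1 le_rfl (by norm_num)) intervalIntegrable_const
    intro t ht
    have hG := hmle t ht.1
    have hGpos : 0 < Real.Gamma (t+1) := Real.Gamma_pos_of_pos (by linarith [ht.1])
    have hxt : x ^ t ≤ x := by
      nth_rewrite 2 [← Real.rpow_one x]
      exact Real.rpow_le_rpow_of_exponent_le hx ht.2
    exact div_le_div₀ hx0.le hxt hm0 hG
  -- sums of adjacent integrals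
  have sum_eq : ∀ k : ℕ,
      (∑ i ∈ Finset.range k, ∫ t in (i:ℝ)..((i:ℝ)+1), f t) = ∫ t in (0:ℝ)..(k:ℝ), f t := by
    intro k
    have h := intervalIntegral.sum_integral_adjacent_intervals
      (a := fun i : ℕ => (i:ℝ)) (f := f) (μ := MeasureTheory.volume) (n := k)
      (fun i _ => by
        push_cast
        exact hint i (i+1) (by positivity) (by linarith))
    push_cast at h
    simpa using h
  -- lower bound
  have lower : (1 / x) * (esum n x - 1) ≤ Efun x z := by
    have step1 : (∑ k ∈ Finset.range n, x ^ k / (Nat.factorial (k+1) : ℝ)) ≤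
        ∫ t in (0:ℝ)..(n:ℝ), f t := by
      rw [← sum_eq n]
      exact Finset.sum_le_sum fun k _ => key_ge k
    have step2 : (∫ t in (0:ℝ)..(n:ℝ), f t) ≤ Efun x z := by
      rw [hE, ← intervalIntegral.integral_add_adjacent_intervals
        (hint 0 n (le_refl 0) (by positivity)) (hint n z (by positivity) hnz)]
      have h3 : 0 ≤ ∫ t in (n:ℝ)..z, f t :=
        intervalIntegral.integral_nonneg hnz
          (fun u hu => hfnonneg u (le_trans (by positivity) hu.1))
      linarith
    have lhs_eq : (1 / x) * (esum n x - 1)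
        = ∑ k ∈ Finset.range n, x ^ k / (Nat.factorial (k+1) : ℝ) := by
      rw [esum, Finset.sum_range_succ']
      simp only [pow_zero, Nat.factorial_zero, Nat.cast_one, div_one]
      rw [add_sub_cancel_right, Finset.mul_sum]
      refine Finset.sum_congr rfl fun k _ => ?_
      rw [pow_succ']
      have hfac : ((Nat.factorial (k+1)) : ℝ) ≠ 0 := by
        exact_mod_cast (Nat.factorial_pos (k+1)).ne'
      field_simp
    rw [lhs_eq]
    exact le_trans step1 step2
  -- upper bound
  have upper : Efun x z ≤ x * (esum (N - 1) x + (1 - m) / m) := by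
    have step1 : Efun x z ≤ ∫ t in (0:ℝ)..(N:ℝ), f t := by
      rw [hE, ← intervalIntegral.integral_add_adjacent_intervals
        (hint 0 z (le_refl 0) (by linarith)) (hint z N (by linarith) hzN)]
      have h3 : 0 ≤ ∫ t in z..(N:ℝ), f t :=
        intervalIntegral.integral_nonneg hzN
          (fun u hu => hfnonneg u (le_trans (by linarith) hu.1))
      linarith
    have step2 : (∫ t in (0:ℝ)..(N:ℝ), f t) ≤
        (∑ j ∈ Finset.range (N-1), x ^ (j+2) / (Nat.factorial (j+1) : ℝ)) + x / m := by
      rw [← sum_eq N]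
      have hNsplit : N = (N - 1) + 1 := by omega
      rw [hNsplit, Finset.sum_range_succ']
      push_cast
      gcongr with j hj
      · have h := key_le (j+1) (by omega)
        push_cast at h
        have he : j + 1 + 1 = j + 2 := by omega
        rw [he] at h
        exact h
      · simpa using key_le0
    have rhs_eq : (∑ j ∈ Finset.range (N-1), x ^ (j+2) / (Nat.factorial (j+1) : ℝ)) + x / m
        = x * (esum (N - 1) x + (1 - m) / m) := by
      rw [esum]
      have hNsplit : N - 1 + 1 = N := by omega
      rw [Finset.sum_range_succ']
      simp only [pow_zero, Nat.factorial_zero, Nat.cast_one, div_one]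
      rw [mul_add, mul_add, mul_one, Finset.mul_sum]
      have hterm : ∀ j : ℕ, x * (x ^ (j+1) / (Nat.factorial (j+1) : ℝ))
          = x ^ (j+2) / (Nat.factorial (j+1) : ℝ) := by
        intro j
        rw [pow_succ' x (j+1), mul_div_assoc]
      rw [Finset.sum_congr rfl fun j _ => (hterm j)]
      have : x / m = x + x * ((1 - m) / m) := by
        field_simp
        ring
      linarith [this]
    exact step1.trans (step2.trans rhs_eq.le)
  exact ⟨lower, upper⟩
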